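/- Let C be a clique in a static graph G and C' ⊆ C a maximal avg-c-isolated subset (C' is avg-c-isolated and no proper superset of C' within C is avg-c-isolated). Let C̃ ⊆ C be the ⌊δ(C) − c + 2⌋ vertices of smallest degree in G among C. Then C̃ ⊆ C'. -/

import Mathlib

open Finset
open scoped Classical

variable {V : Type*} [Fintype V] [DecidableEq V]

/-- Number of neighbors of `v` in `G` lying outside `A`. -/
noncomputable def outdeg (G : SimpleGraph V) (v : V) (A : Finset V) : ℕ :=
  (Finset.univ.filter fun u => G.Adj v u ∧ u ∉ A).card

/-- Degree of `v` in `G`. -/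
noncomputable def deg (G : SimpleGraph V) (v : V) : ℕ :=
  (Finset.univ.filter fun u => G.Adj v u).card

/-- Minimum degree over the vertices of a nonempty set `C`. -/
noncomputable def minDeg (G : SimpleGraph V) (C : Finset V) (hC : C.Nonempty) : ℕ :=
  C.inf' hC fun v => deg G v

/-- Edge-wise intersection of the layers `G a, …, G b`. -/
def interGraph (G : ℕ → SimpleGraph V) (a b : ℕ) : SimpleGraph V where
  Adj u v := u ≠ v ∧ ∀ i ∈ Finset.Icc a b, (G i).Adj u v
  symm := ⟨fun u v h => ⟨h.1.symm, fun i hi => (h.2 i hi).symm⟩⟩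
  loopless := ⟨fun v h => h.1 rfl⟩

/-- Edge-wise union of the layers `G a, …, G b`. -/
def unionGraph (G : ℕ → SimpleGraph V) (a b : ℕ) : SimpleGraph V where
  Adj u v := ∃ i ∈ Finset.Icc a b, (G i).Adj u v
  symm := ⟨fun u v h => ⟨h.choose, h.choose_spec.1, h.choose_spec.2.symm⟩⟩
  loopless := ⟨fun v h => (G h.choose).loopless.irrefl v h.choose_spec.2⟩
/-- `S` is avg-`c`-isolated in `G`. -/
def AvgIsolated (G : SimpleGraph V) (c : ℚ) (S : Finset V) : Prop :=
  (∑ v ∈ S, (outdeg G v S : ℚ)) < c * S.card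

/-! If `v ∈ Ct \ C'`, then `v` is adjacent to all of `C'`, and adding it to `C'` changes the
total outdegree by `deg v - 2|C'|`; maximality forces `deg v > c + 2|C'|`, and by the choice of
`Ct` so does every vertex of `C' \ Ct`. The vertices of `C' ∩ Ct` have degree at least
`δ(C) ≥ |C' ∩ Ct| + c - 1`, because `|Ct| ≤ δ(C) - c + 2`. These lower bounds overshoot the upper
bound `∑_{C'} deg < c|C'| + |C'|² - |C'|` that isolation of `C'` gives inside a clique. -/

theorem outdeg_add_card_filter_adj (G : SimpleGraph V) (v : V) (A : Finset V) :
    outdeg G v A + #{u ∈ A | G.Adj v u} = deg G v := by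
  rw [outdeg, deg, ← card_filter_add_card_filter_not (s := {u | G.Adj v u}) (· ∉ A),
    filter_filter, filter_filter]
  congr 2
  ext u
  simp [and_comm]

section Degrees

variable {G : SimpleGraph V} {A : Finset V} {u v : V}

theorem deg_add_one_le_outdeg_add_card (hu : u ∈ A) : deg G u + 1 ≤ outdeg G u A + #A := by
  have hlt : #{w ∈ A | G.Adj u w} < #A :=
    card_lt_card (filter_ssubset.mpr ⟨u, hu, G.loopless.irrefl u⟩)
  have := outdeg_add_card_filter_adj G u A
  omega

theorem outdeg_eq_outdeg_insert_add_one (huv : G.Adj u v) (hv : v ∉ A) :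
    outdeg G u A = outdeg G u (insert v A) + 1 := by
  have hins : #{w ∈ insert v A | G.Adj u w} = #{w ∈ A | G.Adj u w} + 1 := by
    rw [filter_insert, if_pos huv, card_insert_of_notMem (fun h => hv (mem_filter.mp h).1)]
  have h₁ := outdeg_add_card_filter_adj G u A
  have h₂ := outdeg_add_card_filter_adj G u (insert v A)
  omega

theorem deg_eq_outdeg_insert_add_card (hadj : ∀ u ∈ A, G.Adj v u) :
    deg G v = outdeg G v (insert v A) + #A := by
  have hins : #{w ∈ insert v A | G.Adj v w} = #A := by
    rw [filter_insert, if_neg (G.loopless.irrefl v), filter_true_of_mem hadj]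
  rw [← outdeg_add_card_filter_adj G v (insert v A), hins]

/-- Moving `v` into `A` turns `|A|` outgoing edges of `A` into internal ones and adds the
`deg v - |A|` outgoing edges of `v`. -/
theorem sum_outdeg_insert_add_two_mul_card (hv : v ∉ A) (hadj : ∀ u ∈ A, G.Adj v u) :
    ∑ u ∈ insert v A, outdeg G u (insert v A) + 2 * #A = ∑ u ∈ A, outdeg G u A + deg G v := by
  have hA : ∑ u ∈ A, outdeg G u A = ∑ u ∈ A, outdeg G u (insert v A) + #A := by
    rw [card_eq_sum_ones, ← sum_add_distrib]
    exact sum_congr rfl fun u hu => outdeg_eq_outdeg_insert_add_one (hadj u hu).symm hv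
  rw [sum_insert hv, hA, deg_eq_outdeg_insert_add_card hadj]
  ring

end Degrees

section Isolation

variable {G : SimpleGraph V} {c : ℚ} {A : Finset V} {v : V}

theorem AvgIsolated.sum_deg_add_card_lt (hA : AvgIsolated G c A) :
    ∑ u ∈ A, (deg G u : ℚ) + #A < c * #A + (#A : ℚ) ^ 2 := by
  have hle : ∑ u ∈ A, (deg G u + 1) ≤ ∑ u ∈ A, (outdeg G u A + #A) :=
    sum_le_sum fun u hu => deg_add_one_le_outdeg_add_card hu
  rw [sum_add_distrib, sum_add_distrib, sum_const, sum_const, smul_eq_mul, smul_eq_mul,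
    mul_one] at hle
  have hleℚ : ∑ u ∈ A, (deg G u : ℚ) + #A ≤ ∑ u ∈ A, (outdeg G u A : ℚ) + #A * #A := by
    exact_mod_cast hle
  rw [AvgIsolated] at hA
  nlinarith

theorem AvgIsolated.lt_deg_of_not_avgIsolated_insert (hA : AvgIsolated G c A) (hv : v ∉ A)
    (hadj : ∀ u ∈ A, G.Adj v u) (hins : ¬ AvgIsolated G c (insert v A)) :
    c + 2 * #A < deg G v := by
  have hsum : (∑ u ∈ insert v A, (outdeg G u (insert v A) : ℚ)) + 2 * #A
      = ∑ u ∈ A, (outdeg G u A : ℚ) + deg G v := by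
    exact_mod_cast sum_outdeg_insert_add_two_mul_card hv hadj
  rw [AvgIsolated, not_lt, card_insert_of_notMem hv] at hins
  rw [AvgIsolated] at hA
  push_cast at hins
  linarith

end Isolation

theorem card_mul_minDeg_add_card_mul_le_sum_deg (G : SimpleGraph V) {C A B : Finset V}
    (hC : C.Nonempty) (hA : A ⊆ C) {b : ℕ} (hb : ∀ u ∈ A \ B, b ≤ deg G u) :
    #(A ∩ B) * minDeg G C hC + #(A \ B) * b ≤ ∑ u ∈ A, deg G u := by
  rw [← sum_inter_add_sum_sdiff A B]
  gcongr
  · rw [← smul_eq_mul]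
    exact card_nsmul_le_sum _ _ _ fun u hu => inf'_le _ (hA (mem_inter.mp hu).1)
  · rw [← smul_eq_mul]
    exact card_nsmul_le_sum _ _ _ hb

theorem stmt4_general (G : SimpleGraph V) (c : ℚ)
    (C C' Ct : Finset V) (hC : C.Nonempty)
    (hclique : G.IsClique (C : Set V)) (hsub : C' ⊆ C)
    (hiso : AvgIsolated G c C')
    (hmax : ∀ C'' : Finset V, C' ⊂ C'' → C'' ⊆ C → ¬ AvgIsolated G c C'')
    (hCtsub : Ct ⊆ C)
    (hCtcard : (Ct.card : ℤ) = ⌊(minDeg G C hC : ℚ) - c + 2⌋)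
    (hCtmin : ∀ u ∈ Ct, ∀ v ∈ C \ Ct, deg G u ≤ deg G v) :
    Ct ⊆ C' := by
  intro v hvCt
  by_contra hvC'
  have hvC : v ∈ C := hCtsub hvCt
  have hadj : ∀ u ∈ C', G.Adj v u := fun u hu =>
    hclique hvC (hsub hu) (ne_of_mem_of_not_mem hu hvC').symm
  have hdeg_v := hiso.lt_deg_of_not_avgIsolated_insert hvC' hadj
    (hmax _ (ssubset_insert hvC') (insert_subset hvC hsub))
  have hupper := hiso.sum_deg_add_card_lt
  have hlower : (#(C' ∩ Ct) * minDeg G C hC + #(C' \ Ct) * deg G v : ℚ)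
      ≤ ∑ u ∈ C', (deg G u : ℚ) := by
    exact_mod_cast card_mul_minDeg_add_card_mul_le_sum_deg G hC hsub fun u hu =>
      hCtmin v hvCt u (sdiff_subset_sdiff hsub subset_rfl hu)
  have hsplit : (#(C' ∩ Ct) + #(C' \ Ct) : ℚ) = #C' := by
    exact_mod_cast card_inter_add_card_sdiff C' Ct
  have hinter : (#(C' ∩ Ct) + 1 : ℚ) ≤ #Ct := by
    exact_mod_cast card_lt_card ⟨inter_subset_right, fun h => hvC' (mem_inter.mp (h hvCt)).1⟩
  have hCt : (#Ct : ℚ) ≤ minDeg G C hC - c + 2 := by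
    exact_mod_cast hCtcard ▸ Int.floor_le ((minDeg G C hC : ℚ) - c + 2)
  have hin : (0 : ℚ) ≤ #(C' ∩ Ct) * (minDeg G C hC - c + 1 - #(C' ∩ Ct)) :=
    mul_nonneg (by positivity) (by linarith)
  have hout : (0 : ℚ) ≤ #(C' \ Ct) * (deg G v - c - 2 * #C') :=
    mul_nonneg (by positivity) (by linarith)
  -- with `t = |C' ∩ Ct|` and `r = |C' \ Ct|` the bounds combine to `r² + r < 0`
  nlinarith

theorem stmt4 (G : SimpleGraph V) (c : ℚ) (hc : 0 < c)
    (C C' Ct : Finset V) (hC : C.Nonempty)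
    (hclique : G.IsClique (C : Set V)) (hsub : C' ⊆ C)
    (hiso : AvgIsolated G c C')
    (hmax : ∀ C'' : Finset V, C' ⊂ C'' → C'' ⊆ C → ¬ AvgIsolated G c C'')
    (hCtsub : Ct ⊆ C)
    (hCtcard : (Ct.card : ℤ) = ⌊(minDeg G C hC : ℚ) - c + 2⌋)
    (hCtmin : ∀ u ∈ Ct, ∀ v ∈ C \ Ct, deg G u ≤ deg G v) :
    Ct ⊆ C' :=
  stmt4_general G c C C' Ct hC hclique hsub hiso hmax hCtsub hCtcard hCtmin
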